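/- Throughout the execution of Algorithm B, the following invariant holds at every step: for each ⅋-node L present in the current deNM-tree T, either L is included in the queue Q_up of some labeled node of T, or the right premise label r_L is included in the queue Q_right of some labeled node of T. -/

import Mathlib

/-! ## MLL formulas, links, proof structures, proof nets, DR-switchings -/

abbrev Occ := ℕ

/-- MLL formulas over the single atom `p`. -/
inductive MLLFormula : Type
  | pos : MLLFormula
  | neg : MLLFormula
  | tensor : MLLFormula → MLLFormula → MLLFormula
  | par : MLLFormula → MLLFormula → MLLFormula
deriving DecidableEq

/-- MLL links, given by their occurrences. -/
inductive MLLLink : Type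
  | id (c1 c2 : Occ) : MLLLink
  | tensor (l r c : Occ) : MLLLink
  | par (l r c : Occ) : MLLLink
deriving DecidableEq

def MLLLink.prems : MLLLink → List Occ
  | .id _ _ => []
  | .tensor l r _ => [l, r]
  | .par l r _ => [l, r]

def MLLLink.concs : MLLLink → List Occ
  | .id c1 c2 => [c1, c2]
  | .tensor _ _ c => [c]
  | .par _ _ c => [c]

def MLLLink.IsPar : MLLLink → Prop
  | .par _ _ _ => True
  | _ => False

/-- An MLL proof structure: a finite set of links over formula occurrences. -/
structure ProofStructure where
  links : Finset MLLLink
  form : Occ → MLLFormula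
  nodupLink : ∀ L ∈ links, (MLLLink.concs L ++ MLLLink.prems L).Nodup
  formOk : ∀ L ∈ links,
    (∀ c1 c2, L = MLLLink.id c1 c2 → form c1 = MLLFormula.pos ∧ form c2 = MLLFormula.neg) ∧
    (∀ l r c, L = MLLLink.tensor l r c → form c = MLLFormula.tensor (form l) (form r)) ∧
    (∀ l r c, L = MLLLink.par l r c → form c = MLLFormula.par (form l) (form r))
  concUnique : ∀ L1 ∈ links, ∀ L2 ∈ links, ∀ x,
    x ∈ MLLLink.concs L1 → x ∈ MLLLink.concs L2 → L1 = L2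
  premUnique : ∀ L1 ∈ links, ∀ L2 ∈ links, ∀ x,
    x ∈ MLLLink.prems L1 → x ∈ MLLLink.prems L2 → L1 = L2
  premIsConc : ∀ L ∈ links, ∀ x ∈ MLLLink.prems L, ∃ K ∈ links, K ≠ L ∧ x ∈ MLLLink.concs K

/-- The set of occurrences of a set of links. -/
def occsOf (S : Finset MLLLink) : Set Occ :=
  {x | ∃ L ∈ S, x ∈ MLLLink.concs L ∨ x ∈ MLLLink.prems L}

/-- `x` is a conclusion of the set of links `S`, i.e. a conclusion of some link of `S`
that is not a premise of any link of `S`. -/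
def IsConcOfSet (S : Finset MLLLink) (x : Occ) : Prop :=
  (∃ L ∈ S, x ∈ MLLLink.concs L) ∧ ∀ L ∈ S, x ∉ MLLLink.prems L

/-- Sequentializability: the inductive construction of MLL proof nets, mirroring
the ID, ⊗ and ⅋ rules of the MLL sequent calculus. -/
inductive Sequentializable (form : Occ → MLLFormula) : Finset MLLLink → Prop
  | id (c1 c2 : Occ) : c1 ≠ c2 → form c1 = MLLFormula.pos → form c2 = MLLFormula.neg →
      Sequentializable form {MLLLink.id c1 c2}
  | tensor (S1 S2 : Finset MLLLink) (l r c : Occ) :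
      Sequentializable form S1 → Sequentializable form S2 →
      (∀ x, x ∈ occsOf S1 → x ∉ occsOf S2) →
      IsConcOfSet S1 l → IsConcOfSet S2 r →
      c ∉ occsOf S1 → c ∉ occsOf S2 →
      form c = MLLFormula.tensor (form l) (form r) →
      Sequentializable form (insert (MLLLink.tensor l r c) (S1 ∪ S2))
  | par (S : Finset MLLLink) (l r c : Occ) :
      Sequentializable form S →
      l ≠ r → IsConcOfSet S l → IsConcOfSet S r →
      c ∉ occsOf S →
      form c = MLLFormula.par (form l) (form r) →
      Sequentializable form (insert (MLLLink.par l r c) S)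

/-- An MLL proof net is a sequentializable MLL proof structure. -/
def ProofStructure.IsProofNet (Θ : ProofStructure) : Prop :=
  Sequentializable Θ.form Θ.links

/-- The edges contributed by a link under a DR-switching `sw`
(`sw L = false` selects the left premise of a ⅋-link, `true` the right one). -/
def drStep (sw : MLLLink → Bool) (L : MLLLink) (x y : Occ) : Prop :=
  match L with
  | .id c1 c2 => x = c1 ∧ y = c2
  | .tensor l r c => (x = l ∧ y = c) ∨ (x = r ∧ y = c)
  | .par l r c => if sw (MLLLink.par l r c) = true then x = r ∧ y = c else x = l ∧ y = c

/-- The DR-graph of a proof structure under a DR-switching. -/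
def DRGraph (Θ : ProofStructure) (sw : MLLLink → Bool) : SimpleGraph Occ where
  Adj x y := x ≠ y ∧ ∃ L ∈ Θ.links, drStep sw L x y ∨ drStep sw L y x
  symm := ⟨by
    rintro x y ⟨hxy, L, hL, h⟩
    exact ⟨hxy.symm, L, hL, h.symm⟩⟩
  loopless := ⟨by rintro x ⟨hxx, _⟩; exact hxx rfl⟩

def ProofStructure.occSet (Θ : ProofStructure) : Set Occ := occsOf Θ.links

/-- The extreme left DR-switching `S_∀ℓ`. -/
def extremeLeft : MLLLink → Bool := fun _ => false

/-- The extreme left DR-graph `S_∀ℓ(Θ)`. -/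
def DRGraphL (Θ : ProofStructure) : SimpleGraph Occ := DRGraph Θ extremeLeft

/-- `S_∀ℓ(Θ)` is a tree (on the vertex set of occurrences of `Θ`). -/
def DRTreeL (Θ : ProofStructure) : Prop :=
  ((DRGraphL Θ).induce Θ.occSet).IsTree

/-- Consistency of a ⅋-link with premises `l`, `r` and conclusion `c`:
the unique path in the tree `S_∀ℓ(Θ)` from `l` to `r` does not contain `c`. -/
def ParLinkConsistent (Θ : ProofStructure) (l r c : Occ) : Prop :=
  ∀ p : (DRGraphL Θ).Walk l r, p.IsPath → c ∉ p.support

/-- Every ⅋-link of `Θ` is consistent in `S_∀ℓ(Θ)`. -/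
def AllParConsistent (Θ : ProofStructure) : Prop :=
  ∀ l r c, MLLLink.par l r c ∈ Θ.links → ParLinkConsistent Θ l r c

/-- The edge relation of the directed graph `G(S_∀ℓ(Θ))` on ⅋-links:
`(L1, L2)` is an edge when the unique path in `S_∀ℓ(Θ)` between the premises of `L2`
contains the node of `L1`. -/
def deNMRel (Θ : ProofStructure) (L1 L2 : MLLLink) : Prop :=
  L1 ∈ Θ.links ∧ L2 ∈ Θ.links ∧ L1 ≠ L2 ∧
  ∃ l1 r1 c1, L1 = MLLLink.par l1 r1 c1 ∧
  ∃ l2 r2 c2, L2 = MLLLink.par l2 r2 c2 ∧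
  ∃ p : (DRGraphL Θ).Walk l2 r2, p.IsPath ∧ c1 ∈ p.support

/-- Acyclicity of a directed graph given by a relation. -/
def DirAcyclicRel {α : Type} (R : α → α → Prop) : Prop :=
  ∀ x, ¬ Relation.TransGen R x x

/-- `x` is the left premise of the ⅋-link `P` of `Θ`. -/
def leftPremOfPar (Θ : ProofStructure) (x : Occ) (P : MLLLink) : Prop :=
  P ∈ Θ.links ∧ ∃ r c, P = MLLLink.par x r c

/-- `x` is the right premise of the ⅋-link `P` of `Θ`. -/
def rightPremOfPar (Θ : ProofStructure) (x : Occ) (P : MLLLink) : Prop :=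
  P ∈ Θ.links ∧ ∃ l c, P = MLLLink.par l x c

/-- `x` is a premise of some ⅋-link of `Θ`. -/
def premOfParLink (Θ : ProofStructure) (x : Occ) : Prop :=
  ∃ P, leftPremOfPar Θ x P ∨ rightPremOfPar Θ x P

/-- `x` is a conclusion of the proof structure `Θ`. -/
def IsConcOfTheta (Θ : ProofStructure) (x : Occ) : Prop :=
  IsConcOfSet Θ.links x

/-! ## deNM-trees, the translation T(Θ), the rewriting system, and Algorithm A -/

/-- Labels `ℓ_L` and `r_L` for ⅋-links `L`. -/
inductive DLabel : Type
  | left (L : MLLLink) : DLabel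
  | right (L : MLLLink) : DLabel
deriving DecidableEq

/-- A node of a deNM-tree is either a labeled node carrying a finite label set,
or a ⅋-node labeled by a ⅋-link. -/
inductive DNodeKind : Type
  | labeled (s : Finset DLabel) : DNodeKind
  | par (L : MLLLink) : DNodeKind

/-- The raw data of a deNM-tree: a finite vertex set, a node-kind assignment,
a finite edge set, and for each ⅋-node the neighbour attached at its upper port. -/
structure PreTree where
  V : Finset ℕ
  kind : ℕ → DNodeKind
  edges : Finset (Sym2 ℕ)
  upper : ℕ → Option ℕ

/-- The underlying undirected graph of a deNM-tree. -/
def PreTree.graph (T : PreTree) : SimpleGraph ℕ where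
  Adj x y := x ≠ y ∧ s(x, y) ∈ T.edges
  symm := ⟨by
    rintro x y ⟨hxy, he⟩
    exact ⟨hxy.symm, by rwa [Sym2.eq_swap]⟩⟩
  loopless := ⟨by rintro x ⟨hxx, _⟩; exact hxx rfl⟩

/-- The degree of a vertex. -/
def PreTree.degree (T : PreTree) (v : ℕ) : ℕ :=
  (T.edges.filter (fun e => v ∈ e)).card

/-- `n` is a labeled node of `T`. -/
def PreTree.IsLabeledVertex (T : PreTree) (n : ℕ) : Prop :=
  n ∈ T.V ∧ ∃ s, T.kind n = DNodeKind.labeled s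

/-- `T` is a deNM-tree: a finite tree whose ⅋-nodes have degree 1 or 2 and have
their upper port attached to a neighbour. -/
def PreTree.IsDeNMTree (T : PreTree) : Prop :=
  (∀ e ∈ T.edges, ∀ x ∈ e, x ∈ T.V) ∧
  (∀ e ∈ T.edges, ¬ e.IsDiag) ∧
  (T.graph.induce (↑T.V : Set ℕ)).IsTree ∧
  ∀ v ∈ T.V, ∀ L, T.kind v = DNodeKind.par L →
    (∃ u ∈ T.V, T.upper v = some u ∧ s(v, u) ∈ T.edges) ∧
    1 ≤ T.degree v ∧ T.degree v ≤ 2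

/-- ⅋-consistency of a deNM-tree: for every ⅋-node `v` (for the ⅋-link `L`),
the unique path between its upper-port neighbour (the left premise position)
and any labeled node carrying `r_L` (the right premise position) avoids `v`. -/
def PreTree.ParConsistentD (T : PreTree) : Prop :=
  ∀ v ∈ T.V, ∀ L, T.kind v = DNodeKind.par L →
    ∀ u, T.upper v = some u →
      ∀ w ∈ T.V, ∀ s, T.kind w = DNodeKind.labeled s → DLabel.right L ∈ s →
        ∀ p : T.graph.Walk u w, p.IsPath → v ∉ p.support

/-- The induced directed relation on ⅋-nodes of a deNM-tree:
`(v1, v2)` when the path between the two premise positions of `v2`'s ⅋-link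
passes through `v1`. -/
def PreTree.dirRel (T : PreTree) (v1 v2 : ℕ) : Prop :=
  v1 ∈ T.V ∧ v2 ∈ T.V ∧ v1 ≠ v2 ∧
  (∃ L1, T.kind v1 = DNodeKind.par L1) ∧
  ∃ L2, T.kind v2 = DNodeKind.par L2 ∧
    ∃ u, T.upper v2 = some u ∧
      ∃ w ∈ T.V, ∃ s, T.kind w = DNodeKind.labeled s ∧ DLabel.right L2 ∈ s ∧
        ∃ p : T.graph.Walk u w, p.IsPath ∧ v1 ∈ p.support

/-- Directed acyclicity of a deNM-tree. -/
def PreTree.DirAcyclicD (T : PreTree) : Prop :=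
  ∀ v, ¬ Relation.TransGen T.dirRel v v

/-! ### The translation `T(Θ)` -/

/-- A ⅋-link of `Θ` gets an auxiliary labeled node exactly when its conclusion is a
premise of another ⅋-link. -/
def hasAux (Θ : ProofStructure) (L : MLLLink) : Prop :=
  L ∈ Θ.links ∧ ∃ l r c, L = MLLLink.par l r c ∧ premOfParLink Θ c

/-- The label contributed by an occurrence `x`: `ℓ_P` if `x` is the left premise of a
⅋-link `P`, `r_P` if `x` is the right premise of `P`. -/
def labelOfOcc (Θ : ProofStructure) (x : Occ) (d : DLabel) : Prop :=
  (∃ P, leftPremOfPar Θ x P ∧ d = DLabel.left P) ∨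
  (∃ P, rightPremOfPar Θ x P ∧ d = DLabel.right P)

/-- The labels carried by the (auxiliary) labeled node of a link `K`:
those contributed by the conclusions of `K`. -/
def linkLabel (Θ : ProofStructure) (K : MLLLink) (d : DLabel) : Prop :=
  ∃ x ∈ MLLLink.concs K, labelOfOcc Θ x d

/-- The node through which the subtree translating `K` connects upwards. -/
def OutIs (Θ : ProofStructure) (main aux : MLLLink → ℕ) (K : MLLLink) (v : ℕ) : Prop :=
  (hasAux Θ K ∧ v = aux K) ∨ (¬ hasAux Θ K ∧ v = main K)

/-- The edges of the translation. -/
def EdgeSpec (Θ : ProofStructure) (main aux : MLLLink → ℕ) (u v : ℕ) : Prop :=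
  (∃ x K M, K ∈ Θ.links ∧ M ∈ Θ.links ∧ x ∈ MLLLink.concs K ∧ x ∈ MLLLink.prems M ∧
      ¬ MLLLink.IsPar M ∧ OutIs Θ main aux K u ∧ v = main M) ∨
  (∃ K l r c, K ∈ Θ.links ∧ MLLLink.par l r c ∈ Θ.links ∧ l ∈ MLLLink.concs K ∧
      OutIs Θ main aux K u ∧ v = main (MLLLink.par l r c)) ∨
  (∃ L, hasAux Θ L ∧ u = main L ∧ v = aux L)

/-- The translation `T(Θ)` is defined: `S_∀ℓ(Θ)` is a tree, no ID-link has both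
conclusions premises of ⅋-links, and no ID-link has one conclusion a conclusion of `Θ`
while the other is a premise of a ⅋-link. -/
def TransDefined (Θ : ProofStructure) : Prop :=
  DRTreeL Θ ∧
  ∀ c1 c2, MLLLink.id c1 c2 ∈ Θ.links →
    ¬(premOfParLink Θ c1 ∧ premOfParLink Θ c2) ∧
    ¬(IsConcOfTheta Θ c1 ∧ premOfParLink Θ c2) ∧
    ¬(IsConcOfTheta Θ c2 ∧ premOfParLink Θ c1)

/-- `T` is (a copy of) the deNM-tree `T(Θ)` translating `Θ`. -/
def IsTranslation (Θ : ProofStructure) (T : PreTree) : Prop :=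
  TransDefined Θ ∧
  ∃ main aux : MLLLink → ℕ,
    (∀ L1 ∈ Θ.links, ∀ L2 ∈ Θ.links, main L1 = main L2 → L1 = L2) ∧
    (∀ L1 L2, hasAux Θ L1 → hasAux Θ L2 → aux L1 = aux L2 → L1 = L2) ∧
    (∀ L1 ∈ Θ.links, ∀ L2, hasAux Θ L2 → main L1 ≠ aux L2) ∧
    (∀ v, v ∈ T.V ↔ ((∃ L ∈ Θ.links, v = main L) ∨ (∃ L, hasAux Θ L ∧ v = aux L))) ∧
    (∀ L ∈ Θ.links, ¬ MLLLink.IsPar L →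
        ∃ s, T.kind (main L) = DNodeKind.labeled s ∧ ∀ d, d ∈ s ↔ linkLabel Θ L d) ∧
    (∀ L ∈ Θ.links, MLLLink.IsPar L → T.kind (main L) = DNodeKind.par L) ∧
    (∀ L, hasAux Θ L →
        ∃ s, T.kind (aux L) = DNodeKind.labeled s ∧ ∀ d, d ∈ s ↔ linkLabel Θ L d) ∧
    (∀ l r c, MLLLink.par l r c ∈ Θ.links →
        ∀ K ∈ Θ.links, l ∈ MLLLink.concs K →
          ∀ u, OutIs Θ main aux K u → T.upper (main (MLLLink.par l r c)) = some u) ∧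
    (∀ e, e ∈ T.edges ↔
        ∃ u v, e = s(u, v) ∧ (EdgeSpec Θ main aux u v ∨ EdgeSpec Θ main aux v u))

/-! ### The rewriting system and Algorithm A -/

def replaceN (v a : ℕ) : ℕ → ℕ := fun x => if x = v then a else x

/-- Eliminate the node `v`, letting `a` absorb the remaining connections of `v`
(used by the ⅋-elimination rule). -/
def PreTree.elimAt (T : PreTree) (v a : ℕ) : PreTree where
  V := T.V.erase v
  kind := T.kind
  edges := (T.edges.image (Sym2.map (replaceN v a))).filter (fun e => ¬ e.IsDiag)
  upper := T.upper

def mergeKind (k k' : DNodeKind) : DNodeKind :=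
  match k, k' with
  | DNodeKind.labeled s, DNodeKind.labeled s' => DNodeKind.labeled (s ∪ s')
  | k, _ => k

/-- Merge the labeled node `n'` into the labeled node `a`, taking the union of the
label sets (used by the union rule). -/
def PreTree.contract (T : PreTree) (a n' : ℕ) : PreTree where
  V := T.V.erase n'
  kind := fun x => if x = a then mergeKind (T.kind a) (T.kind n') else T.kind x
  edges := (T.edges.image (Sym2.map (replaceN n' a))).filter (fun e => ¬ e.IsDiag)
  upper := fun x => (T.upper x).map (replaceN n' a)

/-- The three rewrite rules. -/
inductive RRule : Type
  | elim | union | jump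

/-- A configuration of Algorithm A: the current deNM-tree, the active (labeled)
node, and the set of ⅋-links to which the local jump rule has been applied. -/
structure Config where
  tree : PreTree
  active : ℕ
  jumped : Finset MLLLink

/-- One application of a rewrite rule at the active node. -/
inductive Step : RRule → Config → Config → Prop
  | elim (c : Config) (v : ℕ) (L : MLLLink) (s : Finset DLabel) :
      c.active ∈ c.tree.V → v ∈ c.tree.V →
      c.tree.kind c.active = DNodeKind.labeled s →
      c.tree.kind v = DNodeKind.par L →
      c.tree.upper v = some c.active →
      s(c.active, v) ∈ c.tree.edges →
      DLabel.left L ∈ s → DLabel.right L ∈ s →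
      Step RRule.elim c
        { tree := c.tree.elimAt v c.active, active := c.active, jumped := c.jumped }
  | union (c : Config) (n' : ℕ) (s s' : Finset DLabel) :
      c.active ∈ c.tree.V → n' ∈ c.tree.V → n' ≠ c.active →
      c.tree.kind c.active = DNodeKind.labeled s →
      c.tree.kind n' = DNodeKind.labeled s' →
      s(c.active, n') ∈ c.tree.edges →
      Step RRule.union c
        { tree := c.tree.contract c.active n', active := c.active, jumped := c.jumped }
  | jump (c : Config) (v m : ℕ) (L : MLLLink) (s s' : Finset DLabel) :
      c.active ∈ c.tree.V → v ∈ c.tree.V → m ∈ c.tree.V →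
      c.tree.kind c.active = DNodeKind.labeled s →
      c.tree.kind v = DNodeKind.par L →
      s(c.active, v) ∈ c.tree.edges →
      c.tree.upper v ≠ some c.active →
      c.tree.kind m = DNodeKind.labeled s' →
      DLabel.right L ∈ s' →
      L ∉ c.jumped →
      Step RRule.jump c { tree := c.tree, active := m, jumped := insert L c.jumped }

def StepAny (c c' : Config) : Prop := ∃ r, Step r c c'

/-- No rewrite rule applies. -/
def Stuck (c : Config) : Prop := ∀ r c', ¬ Step r c c'

/-- `s` is the full label set `S_full` of `Θ`. -/
def SfullSpec (Θ : ProofStructure) (s : Finset DLabel) : Prop :=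
  ∀ d, d ∈ s ↔ ∃ l r c, MLLLink.par l r c ∈ Θ.links ∧
    (d = DLabel.left (MLLLink.par l r c) ∨ d = DLabel.right (MLLLink.par l r c))

/-- The terminal tree is a single degree-0 node labeled by `S_full`. -/
def FinalYes (Θ : ProofStructure) (c : Config) : Prop :=
  c.tree.V = {c.active} ∧ c.tree.edges = ∅ ∧
  ∃ s, c.tree.kind c.active = DNodeKind.labeled s ∧ SfullSpec Θ s

/-- Algorithm A with input `Θ` outputs yes. -/
def AlgAYes (Θ : ProofStructure) : Prop :=
  TransDefined Θ ∧
  ∀ T, IsTranslation Θ T → ∀ n, T.IsLabeledVertex n →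
    ∀ c', Relation.ReflTransGen StepAny { tree := T, active := n, jumped := ∅ } c' →
      Stuck c' → FinalYes Θ c'

/-- The local jump rule is applicable (up to the double-application check) at the
active node of `c`, targeting the ⅋-link `L`. -/
def JumpReady (c : Config) (L : MLLLink) : Prop :=
  c.active ∈ c.tree.V ∧ (∃ s, c.tree.kind c.active = DNodeKind.labeled s) ∧
  ∃ v ∈ c.tree.V, c.tree.kind v = DNodeKind.par L ∧
    s(c.active, v) ∈ c.tree.edges ∧ c.tree.upper v ≠ some c.active

/-! ## Algorithm B: data structures, reduction strategy, measure -/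

/-- The per-labeled-node data structures of Algorithm B.  Queue entries carry a
Boolean flag: `false` for elements present since the start, `true` for elements
put back by the revival mechanism. -/
structure NodeData where
  Qdown : List ℕ
  Qlab : List ℕ
  Qright : List (MLLLink × Bool)
  Sright : Finset MLLLink
  Qup : List (ℕ × Bool)
  Sup : Finset ℕ
  SUright : Finset MLLLink
  SUup : Finset ℕ

def NodeData.empty : NodeData := ⟨[], [], [], ∅, [], ∅, ∅, ∅⟩

/-- Merging the data structures of two labeled nodes (for the union rule). -/
def NodeData.merge (d d' : NodeData) : NodeData :=
  ⟨d.Qdown ++ d'.Qdown, d.Qlab ++ d'.Qlab, d.Qright ++ d'.Qright, d.Sright ∪ d'.Sright,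
   d.Qup ++ d'.Qup, d.Sup ∪ d'.Sup, d.SUright ∪ d'.SUright, d.SUup ∪ d'.SUup⟩

/-- A configuration of Algorithm B: the current deNM-tree, the active node, the
data structures, the representative (integrating node) of every merged node, and
the ⅋-links already visited by the local jump rule. -/
structure ConfigB where
  tree : PreTree
  active : ℕ
  data : ℕ → NodeData
  rep : ℕ → ℕ
  visited : Finset MLLLink

/-- The initial data structures associated to the deNM-tree `T(Θ)`. -/
def InitData (T : PreTree) (data : ℕ → NodeData) : Prop :=
  ∀ n,
    (T.IsLabeledVertex n →
      ((data n).Qdown.Nodup ∧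
        (∀ v, v ∈ (data n).Qdown ↔
          (v ∈ T.V ∧ (∃ L, T.kind v = DNodeKind.par L) ∧ s(n, v) ∈ T.edges ∧
            T.upper v ≠ some n))) ∧
      ((data n).Qlab.Nodup ∧
        (∀ m, m ∈ (data n).Qlab ↔
          (m ∈ T.V ∧ (∃ s, T.kind m = DNodeKind.labeled s) ∧ s(n, m) ∈ T.edges))) ∧
      ((data n).Qright.Nodup ∧
        (∀ L b, (L, b) ∈ (data n).Qright ↔
          (b = false ∧ ∃ s, T.kind n = DNodeKind.labeled s ∧ DLabel.right L ∈ s))) ∧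
      ((data n).Qup.Nodup ∧
        (∀ v b, (v, b) ∈ (data n).Qup ↔
          (b = false ∧ v ∈ T.V ∧ (∃ L, T.kind v = DNodeKind.par L) ∧ T.upper v = some n))) ∧
      (data n).Sright = ∅ ∧ (data n).Sup = ∅ ∧ (data n).SUright = ∅ ∧ (data n).SUup = ∅) ∧
    (¬ T.IsLabeledVertex n → data n = NodeData.empty)

/-- `Q_down` of the active node contains no live ⅋-node any more. -/
def QdownExhausted (c : ConfigB) : Prop :=
  ∀ v ∈ (c.data c.active).Qdown, v ∉ c.tree.V

/-- `Q_labeled` of the active node contains only (merged copies of) the active node. -/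
def QlabExhausted (c : ConfigB) : Prop :=
  ∀ m ∈ (c.data c.active).Qlab, c.rep m = c.active

def jumpUpdate (c : ConfigB) (rest : List ℕ) (m : ℕ) : ℕ → NodeData :=
  let d1 := Function.update c.data c.active { c.data c.active with Qdown := rest }
  Function.update d1 m
    { d1 m with
      SUright := (d1 m).SUright ∪ (d1 c.active).SUright
      SUup := (d1 m).SUup ∪ (d1 c.active).SUup }

def unionUpdate (c : ConfigB) (rest : List ℕ) (m : ℕ) : ℕ → NodeData :=
  Function.update (Function.update c.data m NodeData.empty) c.active
    (NodeData.merge { c.data c.active with Qlab := rest } (c.data m))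

def repUpdate (rep : ℕ → ℕ) (m a : ℕ) : ℕ → ℕ := fun x => if rep x = m then a else rep x

def elimRightUpdate1 (c : ConfigB) (rest : List (MLLLink × Bool)) : ℕ → NodeData :=
  Function.update c.data c.active { c.data c.active with Qright := rest }

def elimRightUpdate2 (c : ConfigB) (rest : List (MLLLink × Bool)) (w : ℕ) : ℕ → NodeData :=
  Function.update c.data c.active
    { c.data c.active with Qright := rest, Qlab := (c.data c.active).Qlab ++ [w] }

def reviveUpUpdate (c : ConfigB) (rest : List (MLLLink × Bool)) (L : MLLLink) (w v : ℕ) :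
    ℕ → NodeData :=
  let d1 := Function.update c.data c.active
    { c.data c.active with
      Qright := rest
      Sright := insert L (c.data c.active).Sright
      SUright := insert L (c.data c.active).SUright }
  Function.update d1 w { d1 w with Qup := (d1 w).Qup ++ [(v, true)] }

def stashRightUpdate (c : ConfigB) (rest : List (MLLLink × Bool)) (L : MLLLink) :
    ℕ → NodeData :=
  Function.update c.data c.active
    { c.data c.active with
      Qright := rest
      Sright := insert L (c.data c.active).Sright
      SUright := insert L (c.data c.active).SUright }

def elimUpUpdate1 (c : ConfigB) (rest : List (ℕ × Bool)) : ℕ → NodeData :=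
  Function.update c.data c.active { c.data c.active with Qup := rest }

def elimUpUpdate2 (c : ConfigB) (rest : List (ℕ × Bool)) (w : ℕ) : ℕ → NodeData :=
  Function.update c.data c.active
    { c.data c.active with Qup := rest, Qlab := (c.data c.active).Qlab ++ [w] }

def reviveRightUpdate (c : ConfigB) (rest : List (ℕ × Bool)) (v : ℕ) (L : MLLLink) (w : ℕ) :
    ℕ → NodeData :=
  let d1 := Function.update c.data c.active
    { c.data c.active with
      Qup := rest
      Sup := insert v (c.data c.active).Sup
      SUup := insert v (c.data c.active).SUup }
  Function.update d1 w { d1 w with Qright := (d1 w).Qright ++ [(L, true)] }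

def stashUpUpdate (c : ConfigB) (rest : List (ℕ × Bool)) (v : ℕ) : ℕ → NodeData :=
  Function.update c.data c.active
    { c.data c.active with
      Qup := rest
      Sup := insert v (c.data c.active).Sup
      SUup := insert v (c.data c.active).SUup }

/-- One step of Algorithm B, following the reduction strategy. -/
inductive StepB : ConfigB → ConfigB → Prop
  /-- Local jump on the first live element of `Q_down`; the merged sets of the old
  active node are merged into those of the new active node. -/
  | jump (c : ConfigB) (junk : List ℕ) (v : ℕ) (rest : List ℕ) (m : ℕ) (L : MLLLink)
      (s : Finset DLabel) :
      c.active ∈ c.tree.V →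
      (c.data c.active).Qdown = junk ++ v :: rest →
      (∀ u ∈ junk, u ∉ c.tree.V) →
      v ∈ c.tree.V →
      c.tree.kind v = DNodeKind.par L →
      L ∉ c.visited →
      m ∈ c.tree.V →
      c.tree.kind m = DNodeKind.labeled s →
      DLabel.right L ∈ s →
      StepB c
        { tree := c.tree, active := m, data := jumpUpdate c rest m, rep := c.rep,
          visited := insert L c.visited }
  /-- Union with the first element of `Q_labeled` not denoting the active node itself. -/
  | union (c : ConfigB) (junk : List ℕ) (y : ℕ) (rest : List ℕ) (m : ℕ)
      (s s' : Finset DLabel) :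
      c.active ∈ c.tree.V →
      QdownExhausted c →
      (c.data c.active).Qlab = junk ++ y :: rest →
      (∀ z ∈ junk, c.rep z = c.active) →
      c.rep y = m → m ≠ c.active → m ∈ c.tree.V →
      c.tree.kind c.active = DNodeKind.labeled s →
      c.tree.kind m = DNodeKind.labeled s' →
      s(c.active, m) ∈ c.tree.edges →
      StepB c
        { tree := c.tree.contract c.active m, active := c.active,
          data := unionUpdate c rest m, rep := repUpdate c.rep m c.active,
          visited := c.visited }
  /-- ⅋-elimination triggered by the head `r_L` of `Q_right` (the ⅋-node has no
  node below). -/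
  | elimRight1 (c : ConfigB) (L : MLLLink) (b : Bool) (rest : List (MLLLink × Bool))
      (v : ℕ) (s : Finset DLabel) :
      c.active ∈ c.tree.V → QdownExhausted c → QlabExhausted c →
      (c.data c.active).Qright = (L, b) :: rest →
      v ∈ (c.data c.active).Sup →
      v ∈ c.tree.V →
      c.tree.kind v = DNodeKind.par L →
      c.tree.upper v = some c.active →
      s(c.active, v) ∈ c.tree.edges →
      c.tree.kind c.active = DNodeKind.labeled s →
      DLabel.left L ∈ s → DLabel.right L ∈ s →
      (∀ w, s(v, w) ∈ c.tree.edges → w = c.active) →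
      StepB c
        { tree := c.tree.elimAt v c.active, active := c.active,
          data := elimRightUpdate1 c rest, rep := c.rep, visited := c.visited }
  /-- ⅋-elimination triggered by the head `r_L` of `Q_right`; the labeled node `w`
  below the ⅋-node is appended to `Q_labeled`. -/
  | elimRight2 (c : ConfigB) (L : MLLLink) (b : Bool) (rest : List (MLLLink × Bool))
      (v w : ℕ) (s : Finset DLabel) :
      c.active ∈ c.tree.V → QdownExhausted c → QlabExhausted c →
      (c.data c.active).Qright = (L, b) :: rest →
      v ∈ (c.data c.active).Sup →
      v ∈ c.tree.V →
      c.tree.kind v = DNodeKind.par L →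
      c.tree.upper v = some c.active →
      s(c.active, v) ∈ c.tree.edges →
      c.tree.kind c.active = DNodeKind.labeled s →
      DLabel.left L ∈ s → DLabel.right L ∈ s →
      s(v, w) ∈ c.tree.edges → w ≠ c.active → w ≠ v →
      StepB c
        { tree := c.tree.elimAt v c.active, active := c.active,
          data := elimRightUpdate2 c rest w, rep := c.rep, visited := c.visited }
  /-- The head `r_L` of `Q_right` has no partner in `S_up`, but the ⅋-node of `L`
  is recorded in some merged up port set: revival of the ⅋-node into `Q_up`. -/
  | reviveUp (c : ConfigB) (L : MLLLink) (b : Bool) (rest : List (MLLLink × Bool))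
      (w v : ℕ) :
      c.active ∈ c.tree.V → QdownExhausted c → QlabExhausted c →
      (c.data c.active).Qright = (L, b) :: rest →
      (∀ v' ∈ (c.data c.active).Sup, c.tree.kind v' ≠ DNodeKind.par L) →
      w ∈ c.tree.V → v ∈ (c.data w).SUup → c.tree.kind v = DNodeKind.par L →
      StepB c
        { tree := c.tree, active := c.active, data := reviveUpUpdate c rest L w v,
          rep := c.rep, visited := c.visited }
  /-- The head `r_L` of `Q_right` has no partner at all: it is moved to `S_right`
  and `S_∪right`. -/
  | stashRight (c : ConfigB) (L : MLLLink) (b : Bool) (rest : List (MLLLink × Bool)) :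
      c.active ∈ c.tree.V → QdownExhausted c → QlabExhausted c →
      (c.data c.active).Qright = (L, b) :: rest →
      (∀ v' ∈ (c.data c.active).Sup, c.tree.kind v' ≠ DNodeKind.par L) →
      (∀ w ∈ c.tree.V, ∀ v, v ∈ (c.data w).SUup → c.tree.kind v ≠ DNodeKind.par L) →
      StepB c
        { tree := c.tree, active := c.active, data := stashRightUpdate c rest L,
          rep := c.rep, visited := c.visited }
  /-- ⅋-elimination triggered by the head of `Q_up` (no node below the ⅋-node). -/
  | elimUp1 (c : ConfigB) (v : ℕ) (b : Bool) (rest : List (ℕ × Bool)) (L : MLLLink)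
      (s : Finset DLabel) :
      c.active ∈ c.tree.V → QdownExhausted c → QlabExhausted c →
      (c.data c.active).Qright = [] →
      (c.data c.active).Qup = (v, b) :: rest →
      c.tree.kind v = DNodeKind.par L →
      L ∈ (c.data c.active).Sright →
      v ∈ c.tree.V →
      c.tree.upper v = some c.active →
      s(c.active, v) ∈ c.tree.edges →
      c.tree.kind c.active = DNodeKind.labeled s →
      DLabel.left L ∈ s → DLabel.right L ∈ s →
      (∀ w, s(v, w) ∈ c.tree.edges → w = c.active) →
      StepB c
        { tree := c.tree.elimAt v c.active, active := c.active,
          data := elimUpUpdate1 c rest, rep := c.rep, visited := c.visited }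
  /-- ⅋-elimination triggered by the head of `Q_up`; the labeled node `w` below the
  ⅋-node is appended to `Q_labeled`. -/
  | elimUp2 (c : ConfigB) (v : ℕ) (b : Bool) (rest : List (ℕ × Bool)) (L : MLLLink)
      (w : ℕ) (s : Finset DLabel) :
      c.active ∈ c.tree.V → QdownExhausted c → QlabExhausted c →
      (c.data c.active).Qright = [] →
      (c.data c.active).Qup = (v, b) :: rest →
      c.tree.kind v = DNodeKind.par L →
      L ∈ (c.data c.active).Sright →
      v ∈ c.tree.V →
      c.tree.upper v = some c.active →
      s(c.active, v) ∈ c.tree.edges →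
      c.tree.kind c.active = DNodeKind.labeled s →
      DLabel.left L ∈ s → DLabel.right L ∈ s →
      s(v, w) ∈ c.tree.edges → w ≠ c.active → w ≠ v →
      StepB c
        { tree := c.tree.elimAt v c.active, active := c.active,
          data := elimUpUpdate2 c rest w, rep := c.rep, visited := c.visited }
  /-- The head `v` (for the ⅋-link `L`) of `Q_up` has no partner in `S_right`, but
  `r_L` is recorded in some merged right premise label set: revival of `r_L` into
  `Q_right`. -/
  | reviveRight (c : ConfigB) (v : ℕ) (b : Bool) (rest : List (ℕ × Bool)) (L : MLLLink)
      (w : ℕ) :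
      c.active ∈ c.tree.V → QdownExhausted c → QlabExhausted c →
      (c.data c.active).Qright = [] →
      (c.data c.active).Qup = (v, b) :: rest →
      c.tree.kind v = DNodeKind.par L →
      L ∉ (c.data c.active).Sright →
      w ∈ c.tree.V → L ∈ (c.data w).SUright →
      StepB c
        { tree := c.tree, active := c.active, data := reviveRightUpdate c rest v L w,
          rep := c.rep, visited := c.visited }
  /-- The head of `Q_up` has no partner at all: it is moved to `S_up` and `S_∪up`. -/
  | stashUp (c : ConfigB) (v : ℕ) (b : Bool) (rest : List (ℕ × Bool)) (L : MLLLink) :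
      c.active ∈ c.tree.V → QdownExhausted c → QlabExhausted c →
      (c.data c.active).Qright = [] →
      (c.data c.active).Qup = (v, b) :: rest →
      c.tree.kind v = DNodeKind.par L →
      L ∉ (c.data c.active).Sright →
      (∀ w ∈ c.tree.V, L ∉ (c.data w).SUright) →
      StepB c
        { tree := c.tree, active := c.active, data := stashUpUpdate c rest v,
          rep := c.rep, visited := c.visited }

/-- Algorithm B answers yes at `c`: a single degree-0 node labeled by `S_full` remains. -/
def BYes (Θ : ProofStructure) (c : ConfigB) : Prop :=
  c.tree.V = {c.active} ∧ c.tree.edges = ∅ ∧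
  ∃ s, c.tree.kind c.active = DNodeKind.labeled s ∧ SfullSpec Θ s

def StuckB (c : ConfigB) : Prop := ∀ c', ¬ StepB c c'

def initRep : ℕ → ℕ := fun x => x

/-- Algorithm B with input `Θ` answers yes. -/
def AlgBYes (Θ : ProofStructure) : Prop :=
  TransDefined Θ ∧
  ∀ T, IsTranslation Θ T → ∀ n, T.IsLabeledVertex n → ∀ data0, InitData T data0 →
    ∀ c', Relation.ReflTransGen StepB
        { tree := T, active := n, data := data0, rep := initRep, visited := ∅ } c' →
      StuckB c' → BYes Θ c'

/-- Algorithm B with input `Θ` answers no. -/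
def AlgBNo (Θ : ProofStructure) : Prop :=
  ¬ TransDefined Θ ∨
  ∀ T, IsTranslation Θ T → ∀ n, T.IsLabeledVertex n → ∀ data0, InitData T data0 →
    ∀ c', Relation.ReflTransGen StepB
        { tree := T, active := n, data := data0, rep := initRep, visited := ∅ } c' →
      StuckB c' → ¬ BYes Θ c'

/-- `v` is a ⅋-node not yet visited by the local jump rule. -/
def parUnvisited (c : ConfigB) (v : ℕ) : Bool :=
  match c.tree.kind v with
  | DNodeKind.par L => decide (L ∉ c.visited)
  | _ => false

/-- The termination measure `(m1 + m2 + m3 + m4, n1 + n2)` of Algorithm B. -/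
def measureB (c : ConfigB) : ℕ × ℕ :=
  (c.tree.V.card
      + (c.tree.V.filter (fun v => parUnvisited c v = true)).card
      + (∑ v ∈ c.tree.V, ((c.data v).Qup.filter (fun p => !p.2)).length)
      + (∑ v ∈ c.tree.V, ((c.data v).Qright.filter (fun p => !p.2)).length),
    (∑ v ∈ c.tree.V, ((c.data v).Qup.filter (fun p => p.2)).length)
      + (∑ v ∈ c.tree.V, ((c.data v).Qright.filter (fun p => p.2)).length))

/-!
Every step of Algorithm B merges, copies or revives entries of `Q_up`, `Q_right`, `S_∪up` and
`S_∪right`, except that the steps driven by `Q_right` and `Q_up` pop one entry at the active node.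
We therefore carry a stronger invariant: for every ⅋-node `v` of a ⅋-link `L`, `v` is in some
`Q_up` or `S_∪up`, `r_L` is in some `Q_right` or `S_∪right`, and one of the two is in a queue.
A popped entry either belongs to the ⅋-node being eliminated, or it is moved to a merged set;
then its partner is in a queue, either because the step is only taken when the partner is in no
merged set, or because the revival mechanism puts it back into a queue. The revival step needs
that distinct ⅋-nodes of `T(Θ)` carry distinct ⅋-links, so we also record that the tree only
shrinks and that queued and merged ⅋-nodes belong to `T(Θ)`; and, for the conclusion, that
only live labeled nodes carry data.
-/

def PreTree.ParInjective (T : PreTree) : Prop :=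
  ∀ v₁ ∈ T.V, ∀ v₂ ∈ T.V, ∀ L, T.kind v₁ = .par L → T.kind v₂ = .par L → v₁ = v₂

namespace IsTranslation

variable {Θ : ProofStructure} {T : PreTree} {main aux : MLLLink → ℕ}

lemma eq_main_of_kind_eq_par
    (hV : ∀ v, v ∈ T.V ↔ ((∃ L ∈ Θ.links, v = main L) ∨ (∃ L, hasAux Θ L ∧ v = aux L)))
    (hnp : ∀ L ∈ Θ.links, ¬ L.IsPar →
      ∃ s, T.kind (main L) = .labeled s ∧ ∀ d, d ∈ s ↔ linkLabel Θ L d)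
    (hp : ∀ L ∈ Θ.links, L.IsPar → T.kind (main L) = .par L)
    (hax : ∀ L, hasAux Θ L → ∃ s, T.kind (aux L) = .labeled s ∧ ∀ d, d ∈ s ↔ linkLabel Θ L d)
    {v : ℕ} (hv : v ∈ T.V) {L : MLLLink} (hk : T.kind v = .par L) :
    L ∈ Θ.links ∧ L.IsPar ∧ v = main L := by
  rcases (hV v).1 hv with ⟨K, hK, rfl⟩ | ⟨K, hK, rfl⟩
  · by_cases hKp : K.IsPar
    · obtain rfl : K = L := by simpa [hp K hK hKp] using hk
      exact ⟨hK, hKp, rfl⟩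
    · obtain ⟨s, hs, -⟩ := hnp K hK hKp
      simp [hs] at hk
  · obtain ⟨s, hs, -⟩ := hax K hK
    simp [hs] at hk

lemma exists_out_node
    (hV : ∀ v, v ∈ T.V ↔ ((∃ L ∈ Θ.links, v = main L) ∨ (∃ L, hasAux Θ L ∧ v = aux L)))
    (hnp : ∀ L ∈ Θ.links, ¬ L.IsPar →
      ∃ s, T.kind (main L) = .labeled s ∧ ∀ d, d ∈ s ↔ linkLabel Θ L d)
    (hax : ∀ L, hasAux Θ L → ∃ s, T.kind (aux L) = .labeled s ∧ ∀ d, d ∈ s ↔ linkLabel Θ L d)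
    {K : MLLLink} (hK : K ∈ Θ.links) {x : Occ} (hx : x ∈ K.concs) (hxp : premOfParLink Θ x) :
    ∃ u s, u ∈ T.V ∧ T.kind u = .labeled s ∧ (∀ d, d ∈ s ↔ linkLabel Θ K d) ∧
      OutIs Θ main aux K u := by
  by_cases ha : hasAux Θ K
  · obtain ⟨s, hs, hiff⟩ := hax K ha
    exact ⟨aux K, s, (hV _).2 (Or.inr ⟨K, ha, rfl⟩), hs, hiff, Or.inl ⟨ha, rfl⟩⟩
  · have hKp : ¬ K.IsPar := by
      intro hKp
      obtain ⟨l, r, c, rfl⟩ : ∃ l r c, K = .par l r c := by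
        cases K <;> simp_all [MLLLink.IsPar]
      obtain rfl : x = c := by simpa [MLLLink.concs] using hx
      exact ha ⟨hK, l, r, x, rfl, hxp⟩
    obtain ⟨s, hs, hiff⟩ := hnp K hK hKp
    exact ⟨main K, s, (hV _).2 (Or.inl ⟨K, hK, rfl⟩), hs, hiff, Or.inr ⟨ha, rfl⟩⟩

lemma parInjective (hT : IsTranslation Θ T) : T.ParInjective := by
  obtain ⟨-, main, aux, -, -, -, hV, hnp, hp, hax, -⟩ := hT
  intro v₁ hv₁ v₂ hv₂ L hk₁ hk₂
  rw [(eq_main_of_kind_eq_par hV hnp hp hax hv₁ hk₁).2.2,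
    (eq_main_of_kind_eq_par hV hnp hp hax hv₂ hk₂).2.2]

lemma exists_upper (hT : IsTranslation Θ T) {v : ℕ} (hv : v ∈ T.V) {L : MLLLink}
    (hk : T.kind v = .par L) : ∃ u, T.IsLabeledVertex u ∧ T.upper v = some u := by
  obtain ⟨-, main, aux, -, -, -, hV, hnp, hp, hax, hup, -⟩ := hT
  obtain ⟨hL, hLp, rfl⟩ := eq_main_of_kind_eq_par hV hnp hp hax hv hk
  obtain ⟨l, r, c, rfl⟩ : ∃ l r c, L = .par l r c := by cases L <;> simp_all [MLLLink.IsPar]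
  obtain ⟨K, hK, -, hlK⟩ := Θ.premIsConc _ hL l (by simp [MLLLink.prems])
  obtain ⟨u, s, hu, hs, -, hout⟩ :=
    exists_out_node hV hnp hax hK hlK ⟨_, Or.inl ⟨hL, r, c, rfl⟩⟩
  exact ⟨u, ⟨hu, s, hs⟩, hup l r c hL K hK hlK u hout⟩

lemma exists_right_label (hT : IsTranslation Θ T) {v : ℕ} (hv : v ∈ T.V) {L : MLLLink}
    (hk : T.kind v = .par L) :
    ∃ u s, u ∈ T.V ∧ T.kind u = .labeled s ∧ DLabel.right L ∈ s := by
  obtain ⟨-, main, aux, -, -, -, hV, hnp, hp, hax, -⟩ := hT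
  obtain ⟨hL, hLp, -⟩ := eq_main_of_kind_eq_par hV hnp hp hax hv hk
  obtain ⟨l, r, c, rfl⟩ : ∃ l r c, L = .par l r c := by cases L <;> simp_all [MLLLink.IsPar]
  obtain ⟨K, hK, -, hrK⟩ := Θ.premIsConc _ hL r (by simp [MLLLink.prems])
  obtain ⟨u, s, hu, hs, hiff, -⟩ :=
    exists_out_node hV hnp hax hK hrK ⟨_, Or.inr ⟨hL, l, c, rfl⟩⟩
  exact ⟨u, s, hu, hs, (hiff _).2 ⟨r, hrK, Or.inr ⟨_, ⟨hL, l, c, rfl⟩, rfl⟩⟩⟩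

end IsTranslation

namespace PreTree

variable {T : PreTree} {a m : ℕ} {s s' : Finset DLabel}

lemma contract_kind_eq_par_iff (ha : T.kind a = .labeled s) (hm : T.kind m = .labeled s')
    (x : ℕ) (L : MLLLink) : (T.contract a m).kind x = .par L ↔ T.kind x = .par L := by
  simp only [contract]
  split_ifs with hxa
  · subst hxa; simp [ha, hm, mergeKind]
  · rfl

lemma isLabeledVertex_contract (ha : T.kind a = .labeled s) (hm : T.kind m = .labeled s')
    {w : ℕ} (hw : T.IsLabeledVertex w) (hwm : w ≠ m) : (T.contract a m).IsLabeledVertex w := by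
  obtain ⟨hwV, t, ht⟩ := hw
  refine ⟨Finset.mem_erase.2 ⟨hwm, hwV⟩, ?_⟩
  by_cases hwa : w = a
  · subst hwa; exact ⟨t ∪ s', by simp [contract, ht, hm, mergeKind]⟩
  · exact ⟨t, by simp [contract, hwa, ht]⟩

end PreTree

def NodeData.upQueue (n : NodeData) : Set ℕ := {v | ∃ b, (v, b) ∈ n.Qup}

def NodeData.rightQueue (n : NodeData) : Set MLLLink := {L | ∃ b, (L, b) ∈ n.Qright}

def NodeData.upMerged (n : NodeData) : Set ℕ := ↑n.SUup

def NodeData.rightMerged (n : NodeData) : Set MLLLink := ↑n.SUright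

def NodeData.IsIdle (n : NodeData) : Prop :=
  n.upQueue = ∅ ∧ n.rightQueue = ∅ ∧ n.upMerged = ∅ ∧ n.rightMerged = ∅

namespace NodeData

variable {n n' : NodeData}

lemma not_isIdle_of_mem_upQueue {v : ℕ} (h : v ∈ n.upQueue) : ¬ n.IsIdle :=
  fun hi => by simp [hi.1] at h

lemma not_isIdle_of_mem_rightQueue {L : MLLLink} (h : L ∈ n.rightQueue) : ¬ n.IsIdle :=
  fun hi => by simp [hi.2.1] at h

lemma not_isIdle_of_mem_upMerged {v : ℕ} (h : v ∈ n.upMerged) : ¬ n.IsIdle :=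
  fun hi => by simp [hi.2.2.1] at h

lemma not_isIdle_of_mem_rightMerged {L : MLLLink} (h : L ∈ n.rightMerged) : ¬ n.IsIdle :=
  fun hi => by simp [hi.2.2.2] at h

lemma upQueue_of_Qup_eq_cons {v : ℕ} {b : Bool} (h : n.Qup = (v, b) :: n'.Qup) :
    n.upQueue = insert v n'.upQueue := by
  ext u; simp [upQueue, h]; cases b <;> tauto

lemma rightQueue_of_Qright_eq_cons {L : MLLLink} {b : Bool}
    (h : n.Qright = (L, b) :: n'.Qright) : n.rightQueue = insert L n'.rightQueue := by
  ext L'; simp [rightQueue, h]; cases b <;> tauto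

lemma upQueue_of_Qup_eq_append {v : ℕ} {b : Bool} (h : n.Qup = n'.Qup ++ [(v, b)]) :
    n.upQueue = insert v n'.upQueue := by
  ext u; simp [upQueue, h]; cases b <;> tauto

lemma rightQueue_of_Qright_eq_append {L : MLLLink} {b : Bool}
    (h : n.Qright = n'.Qright ++ [(L, b)]) : n.rightQueue = insert L n'.rightQueue := by
  ext L'; simp [rightQueue, h]; cases b <;> tauto

lemma upQueue_merge : (n.merge n').upQueue = n.upQueue ∪ n'.upQueue := by
  ext; simp [upQueue, merge, exists_or]

lemma rightQueue_merge : (n.merge n').rightQueue = n.rightQueue ∪ n'.rightQueue := by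
  ext; simp [rightQueue, merge, exists_or]

lemma upMerged_merge : (n.merge n').upMerged = n.upMerged ∪ n'.upMerged := by
  simp [upMerged, merge]

lemma rightMerged_merge : (n.merge n').rightMerged = n.rightMerged ∪ n'.rightMerged := by
  simp [rightMerged, merge]

lemma isIdle_empty : empty.IsIdle := by
  simp [IsIdle, empty, upQueue, rightQueue, upMerged, rightMerged]

end NodeData

def recorded {α : Type} (f : NodeData → Set α) (d : ℕ → NodeData) : Set α := ⋃ w, f (d w)

section Recorded

variable {α : Type} {f : NodeData → Set α} {d : ℕ → NodeData} {a : ℕ} {x : NodeData}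

lemma mem_recorded {y : α} : y ∈ recorded f d ↔ ∃ w, y ∈ f (d w) := Set.mem_iUnion

lemma recorded_update_subset (h : f x ⊆ f (d a)) :
    recorded f (Function.update d a x) ⊆ recorded f d := by
  intro y hy
  obtain ⟨w, hw⟩ := mem_recorded.1 hy
  by_cases hwa : w = a
  · subst hwa; exact mem_recorded.2 ⟨w, h (by simpa using hw)⟩
  · exact mem_recorded.2 ⟨w, by simpa [hwa] using hw⟩

lemma recorded_subset_insert_update {y : α} (h : f (d a) ⊆ insert y (f x)) :
    recorded f d ⊆ insert y (recorded f (Function.update d a x)) := by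
  intro z hz
  obtain ⟨w, hw⟩ := mem_recorded.1 hz
  by_cases hwa : w = a
  · subst hwa
    exact (h hw).imp_right fun h' => mem_recorded.2 ⟨w, by simpa using h'⟩
  · exact Or.inr (mem_recorded.2 ⟨w, by simpa [hwa] using hw⟩)

lemma recorded_update_of_eq_insert {y : α} (h : f x = insert y (f (d a))) :
    recorded f (Function.update d a x) = insert y (recorded f d) := by
  ext z
  simp only [mem_recorded, Set.mem_insert_iff]
  constructor
  · rintro ⟨w, hw⟩
    by_cases hwa : w = a
    · subst hwa
      simp only [Function.update_self, h, Set.mem_insert_iff] at hw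
      exact hw.imp_right (⟨w, ·⟩)
    · exact Or.inr ⟨w, by simpa [hwa] using hw⟩
  · rintro (rfl | ⟨w, hw⟩)
    · exact ⟨a, by simp [h]⟩
    · by_cases hwa : w = a
      · subst hwa; exact ⟨w, by simp [h, hw]⟩
      · exact ⟨w, by simpa [hwa] using hw⟩

lemma recorded_update_merge {m : ℕ} {x₀ : NodeData} (hma : m ≠ a) (h₀ : f x₀ = ∅)
    (h : f x = f (d a) ∪ f (d m)) :
    recorded f (Function.update (Function.update d m x₀) a x) = recorded f d := by
  ext z
  simp only [mem_recorded]
  constructor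
  · rintro ⟨w, hw⟩
    by_cases hwa : w = a
    · subst hwa
      simp only [Function.update_self, h] at hw
      exact hw.elim (⟨w, ·⟩) (⟨m, ·⟩)
    · by_cases hwm : w = m
      · subst hwm; simp [hwa, h₀] at hw
      · exact ⟨w, by simpa [hwa, hwm] using hw⟩
  · rintro ⟨w, hw⟩
    by_cases hwa : w = a
    · subst hwa; exact ⟨w, by simp [h, hw]⟩
    · by_cases hwm : w = m
      · subst hwm; exact ⟨a, by simp [h, hw]⟩
      · exact ⟨w, by simpa [hwa, hwm] using hw⟩

lemma recorded_update_of_absorb {b : ℕ} (h : f x = f (d a) ∪ f (d b)) :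
    recorded f (Function.update d a x) = recorded f d := by
  ext z
  simp only [mem_recorded]
  constructor
  · rintro ⟨w, hw⟩
    by_cases hwa : w = a
    · subst hwa
      simp only [Function.update_self, h] at hw
      exact hw.elim (⟨w, ·⟩) (⟨b, ·⟩)
    · exact ⟨w, by simpa [hwa] using hw⟩
  · rintro ⟨w, hw⟩
    by_cases hwa : w = a
    · subst hwa; exact ⟨w, by simp [h, hw]⟩
    · exact ⟨w, by simpa [hwa] using hw⟩

lemma recorded_update_of_eq (h : f x = f (d a)) :
    recorded f (Function.update d a x) = recorded f d :=
  recorded_update_of_absorb (b := a) (by rw [h, Set.union_self])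

lemma not_isIdle_of_not_isIdle_update (ha : ¬ x.IsIdle → ¬ (d a).IsIdle) (w : ℕ)
    (hw : ¬ (Function.update d a x w).IsIdle) : ¬ (d w).IsIdle := by
  by_cases hwa : w = a
  · subst hwa; exact ha (by simpa using hw)
  · simpa [hwa] using hw

end Recorded

def ParTracked (d : ℕ → NodeData) (v : ℕ) (L : MLLLink) : Prop :=
  (v ∈ recorded NodeData.upQueue d ∨ v ∈ recorded NodeData.upMerged d) ∧
  (L ∈ recorded NodeData.rightQueue d ∨ L ∈ recorded NodeData.rightMerged d) ∧
  (v ∈ recorded NodeData.upQueue d ∨ L ∈ recorded NodeData.rightQueue d)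

lemma ParTracked.mono {d d' : ℕ → NodeData} {v : ℕ} {L : MLLLink} (h : ParTracked d v L)
    (hUQ : v ∈ recorded NodeData.upQueue d → v ∈ recorded NodeData.upQueue d')
    (hUM : v ∈ recorded NodeData.upMerged d → v ∈ recorded NodeData.upMerged d')
    (hRQ : L ∈ recorded NodeData.rightQueue d → L ∈ recorded NodeData.rightQueue d')
    (hRM : L ∈ recorded NodeData.rightMerged d → L ∈ recorded NodeData.rightMerged d') :
    ParTracked d' v L :=
  ⟨h.1.imp hUQ hUM, h.2.1.imp hRQ hRM, h.2.2.imp hUQ hRQ⟩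

structure InvariantB (T t : PreTree) (d : ℕ → NodeData) : Prop where
  kind_eq_par_iff : ∀ x L, t.kind x = .par L ↔ T.kind x = .par L
  V_subset : t.V ⊆ T.V
  upQueue_subset : recorded NodeData.upQueue d ⊆ T.V
  upMerged_subset : recorded NodeData.upMerged d ⊆ T.V
  isLabeledVertex : ∀ w, ¬ (d w).IsIdle → t.IsLabeledVertex w
  parTracked : ∀ v ∈ t.V, ∀ L, t.kind v = .par L → ParTracked d v L

namespace InvariantB

variable {T t : PreTree} {d : ℕ → NodeData}

lemma eq_of_kind_eq_par (hinj : T.ParInjective) (h : InvariantB T t d) {u v : ℕ} {L : MLLLink}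
    (hu : u ∈ t.V) (hku : t.kind u = .par L) (hv : v ∈ T.V) (hkv : t.kind v = .par L) :
    u = v :=
  hinj u (h.V_subset hu) v hv L ((h.kind_eq_par_iff u L).1 hku) ((h.kind_eq_par_iff v L).1 hkv)

lemma of_recorded_eq (h : InvariantB T t d) {t' : PreTree} {d' : ℕ → NodeData}
    (hkind : ∀ x L, t'.kind x = .par L ↔ t.kind x = .par L) (hV : t'.V ⊆ t.V)
    (hUQ : recorded NodeData.upQueue d' = recorded NodeData.upQueue d)
    (hUM : recorded NodeData.upMerged d' = recorded NodeData.upMerged d)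
    (hRQ : recorded NodeData.rightQueue d' = recorded NodeData.rightQueue d)
    (hRM : recorded NodeData.rightMerged d' = recorded NodeData.rightMerged d)
    (hidle : ∀ w, ¬ (d' w).IsIdle → t'.IsLabeledVertex w) : InvariantB T t' d' where
  kind_eq_par_iff x L := (hkind x L).trans (h.kind_eq_par_iff x L)
  V_subset := hV.trans h.V_subset
  upQueue_subset := hUQ ▸ h.upQueue_subset
  upMerged_subset := hUM ▸ h.upMerged_subset
  isLabeledVertex := hidle
  parTracked v hv L hk := by
    have := h.parTracked v (hV hv) L ((hkind v L).1 hk)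
    rwa [ParTracked, hUQ, hUM, hRQ, hRM]

lemma elimAt (hinj : T.ParInjective) (h : InvariantB T t d) {v a : ℕ} {L : MLLLink}
    {d' : ℕ → NodeData} (hv : v ∈ t.V) (hkv : t.kind v = .par L)
    (hUQ : recorded NodeData.upQueue d' ⊆ recorded NodeData.upQueue d)
    (hUQ' : recorded NodeData.upQueue d ⊆ insert v (recorded NodeData.upQueue d'))
    (hUM : recorded NodeData.upMerged d' = recorded NodeData.upMerged d)
    (hRQ : recorded NodeData.rightQueue d ⊆ insert L (recorded NodeData.rightQueue d'))
    (hRM : recorded NodeData.rightMerged d' = recorded NodeData.rightMerged d)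
    (hidle : ∀ w, ¬ (d' w).IsIdle → ¬ (d w).IsIdle) : InvariantB T (t.elimAt v a) d' where
  kind_eq_par_iff := h.kind_eq_par_iff
  V_subset := (Finset.erase_subset v t.V).trans h.V_subset
  upQueue_subset := hUQ.trans h.upQueue_subset
  upMerged_subset := hUM ▸ h.upMerged_subset
  isLabeledVertex w hw := by
    obtain ⟨hwV, s, hs⟩ := h.isLabeledVertex w (hidle w hw)
    refine ⟨Finset.mem_erase.2 ⟨?_, hwV⟩, s, hs⟩
    rintro rfl
    simp [hs] at hkv
  parTracked u hu L' hk := by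
    obtain ⟨huv, hu⟩ := Finset.mem_erase.1 hu
    have hLL' : L' ≠ L := by
      rintro rfl
      exact huv (h.eq_of_kind_eq_par hinj hu hk (h.V_subset hv) hkv)
    refine (h.parTracked u hu L' hk).mono (fun hq => ?_) (hUM ▸ ·) (fun hq => ?_) (hRM ▸ ·)
    · exact (hUQ' hq).resolve_left huv
    · exact (hRQ hq).resolve_left hLL'

lemma moveRight (h : InvariantB T t d) {L : MLLLink} {d' : ℕ → NodeData}
    (hUQ : recorded NodeData.upQueue d ⊆ recorded NodeData.upQueue d')
    (hUQ' : recorded NodeData.upQueue d' ⊆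
      recorded NodeData.upQueue d ∪ recorded NodeData.upMerged d)
    (hUM : recorded NodeData.upMerged d' = recorded NodeData.upMerged d)
    (hRQ : recorded NodeData.rightQueue d ⊆ insert L (recorded NodeData.rightQueue d'))
    (hRM : recorded NodeData.rightMerged d' = insert L (recorded NodeData.rightMerged d))
    (hidle : ∀ w, ¬ (d' w).IsIdle → ¬ (d w).IsIdle)
    (hL : ∀ u ∈ t.V, t.kind u = .par L → u ∈ recorded NodeData.upQueue d') :
    InvariantB T t d' where
  kind_eq_par_iff := h.kind_eq_par_iff
  V_subset := h.V_subset
  upQueue_subset := hUQ'.trans (Set.union_subset h.upQueue_subset h.upMerged_subset)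
  upMerged_subset := hUM ▸ h.upMerged_subset
  isLabeledVertex w hw := h.isLabeledVertex w (hidle w hw)
  parTracked u hu L' hk := by
    by_cases hLL' : L' = L
    · subst hLL'
      have hq := hL u hu hk
      exact ⟨Or.inl hq, Or.inr (hRM ▸ Set.mem_insert _ _), Or.inl hq⟩
    · refine (h.parTracked u hu L' hk).mono (hUQ ·) (hUM ▸ ·) (fun hq => ?_) (fun hm => ?_)
      · exact (hRQ hq).resolve_left hLL'
      · exact hRM ▸ Set.mem_insert_of_mem _ hm

lemma moveUp (h : InvariantB T t d) {v : ℕ} {d' : ℕ → NodeData}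
    (hv : v ∈ recorded NodeData.upQueue d)
    (hUQ : recorded NodeData.upQueue d ⊆ insert v (recorded NodeData.upQueue d'))
    (hUQ' : recorded NodeData.upQueue d' ⊆ recorded NodeData.upQueue d)
    (hUM : recorded NodeData.upMerged d' = insert v (recorded NodeData.upMerged d))
    (hRQ : recorded NodeData.rightQueue d ⊆ recorded NodeData.rightQueue d')
    (hRM : recorded NodeData.rightMerged d' = recorded NodeData.rightMerged d)
    (hidle : ∀ w, ¬ (d' w).IsIdle → ¬ (d w).IsIdle)
    (hL : ∀ L, v ∈ t.V → t.kind v = .par L → L ∈ recorded NodeData.rightQueue d') :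
    InvariantB T t d' where
  kind_eq_par_iff := h.kind_eq_par_iff
  V_subset := h.V_subset
  upQueue_subset := hUQ'.trans h.upQueue_subset
  upMerged_subset := hUM ▸ Set.insert_subset (h.upQueue_subset hv) h.upMerged_subset
  isLabeledVertex w hw := h.isLabeledVertex w (hidle w hw)
  parTracked u hu L hk := by
    by_cases huv : u = v
    · subst huv
      have hq := hL L hu hk
      exact ⟨Or.inr (hUM ▸ Set.mem_insert _ _), Or.inl hq, Or.inr hq⟩
    · refine (h.parTracked u hu L hk).mono (fun hq => ?_) (fun hm => ?_) (hRQ ·) (hRM ▸ ·)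
      · exact (hUQ hq).resolve_left huv
      · exact hUM ▸ Set.mem_insert_of_mem _ hm

lemma init {Θ : ProofStructure} (hT : IsTranslation Θ T)
    {d : ℕ → NodeData} (hd : InitData T d) : InvariantB T T d where
  kind_eq_par_iff _ _ := Iff.rfl
  V_subset := subset_rfl
  upQueue_subset v hv := by
    obtain ⟨w, b, hb⟩ := mem_recorded.1 hv
    by_cases hw : T.IsLabeledVertex w
    · exact (((hd w).1 hw).2.2.2.1.2 v b |>.1 hb).2.1
    · simp [(hd w).2 hw, NodeData.empty] at hb
  upMerged_subset v hv := by
    obtain ⟨w, hw⟩ := mem_recorded.1 hv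
    by_cases hlab : T.IsLabeledVertex w
    · simp [NodeData.upMerged, ((hd w).1 hlab).2.2.2.2.2.2.2] at hw
    · simp [NodeData.upMerged, (hd w).2 hlab, NodeData.empty] at hw
  isLabeledVertex w hw := by
    by_contra hlab
    exact hw ((hd w).2 hlab ▸ NodeData.isIdle_empty)
  parTracked v hv L hk := by
    obtain ⟨u, hu, hup⟩ := hT.exists_upper hv hk
    obtain ⟨u', s, hu', hs, hL⟩ := hT.exists_right_label hv hk
    have hUQ : v ∈ recorded NodeData.upQueue d :=
      mem_recorded.2 ⟨u, false, ((hd u).1 hu).2.2.2.1.2 v false |>.2 ⟨rfl, hv, ⟨L, hk⟩, hup⟩⟩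
    have hRQ : L ∈ recorded NodeData.rightQueue d :=
      mem_recorded.2 ⟨u', false,
        ((hd u').1 ⟨hu', s, hs⟩).2.2.1.2 L false |>.2 ⟨rfl, s, hs, hL⟩⟩
    exact ⟨Or.inl hUQ, Or.inl hRQ, Or.inl hUQ⟩

variable {c : ConfigB}

lemma elimRight (hinj : T.ParInjective) (h : InvariantB T t d) {a v : ℕ} {L : MLLLink}
    {b : Bool} {x : NodeData} (hv : v ∈ t.V) (hkv : t.kind v = .par L)
    (hQr : (d a).Qright = (L, b) :: x.Qright)
    (hx : x.upQueue = (d a).upQueue ∧ x.upMerged = (d a).upMerged ∧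
      x.rightMerged = (d a).rightMerged) :
    InvariantB T (t.elimAt v a) (Function.update d a x) := by
  have hRQ := NodeData.rightQueue_of_Qright_eq_cons hQr
  refine h.elimAt hinj hv hkv (recorded_update_of_eq hx.1).subset ?_
    (recorded_update_of_eq hx.2.1) ?_ (recorded_update_of_eq hx.2.2) ?_
  · exact (recorded_update_of_eq hx.1).symm.subset.trans (Set.subset_insert _ _)
  · exact recorded_subset_insert_update hRQ.subset
  · exact not_isIdle_of_not_isIdle_update fun _ =>
      NodeData.not_isIdle_of_mem_rightQueue (hRQ ▸ Set.mem_insert _ _)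

lemma elimUp (hinj : T.ParInjective) (h : InvariantB T t d) {a v : ℕ} {L : MLLLink}
    {b : Bool} {x : NodeData} (hv : v ∈ t.V) (hkv : t.kind v = .par L)
    (hQu : (d a).Qup = (v, b) :: x.Qup)
    (hx : x.rightQueue = (d a).rightQueue ∧ x.upMerged = (d a).upMerged ∧
      x.rightMerged = (d a).rightMerged) :
    InvariantB T (t.elimAt v a) (Function.update d a x) := by
  have hUQ := NodeData.upQueue_of_Qup_eq_cons hQu
  refine h.elimAt hinj hv hkv (recorded_update_subset (hUQ ▸ Set.subset_insert _ _))
    (recorded_subset_insert_update hUQ.subset) (recorded_update_of_eq hx.2.1) ?_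
    (recorded_update_of_eq hx.2.2) ?_
  · exact (recorded_update_of_eq hx.1).symm.subset.trans (Set.subset_insert _ _)
  · exact not_isIdle_of_not_isIdle_update fun _ =>
      NodeData.not_isIdle_of_mem_upQueue (hUQ ▸ Set.mem_insert _ _)

lemma stashRight (h : InvariantB T c.tree c.data) {L : MLLLink} {b : Bool}
    {rest : List (MLLLink × Bool)} (hQr : (c.data c.active).Qright = (L, b) :: rest)
    (hSU : ∀ w ∈ c.tree.V, ∀ v, v ∈ (c.data w).SUup → c.tree.kind v ≠ .par L) :
    InvariantB T c.tree (stashRightUpdate c rest L) := by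
  have hRQ :=
    NodeData.rightQueue_of_Qright_eq_cons (n' := { c.data c.active with Qright := rest }) hQr
  have hUQ : recorded NodeData.upQueue (stashRightUpdate c rest L) =
      recorded NodeData.upQueue c.data := recorded_update_of_eq (by rfl)
  refine h.moveRight hUQ.symm.subset (hUQ.subset.trans Set.subset_union_left)
    (recorded_update_of_eq (by rfl)) (recorded_subset_insert_update hRQ.subset)
    (recorded_update_of_eq_insert (Finset.coe_insert _ _))
    (not_isIdle_of_not_isIdle_update fun _ =>
      NodeData.not_isIdle_of_mem_rightQueue (hRQ ▸ Set.mem_insert _ _)) ?_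
  intro u hu hk
  refine hUQ ▸ (h.parTracked u hu L hk).1.resolve_right ?_
  intro hm
  obtain ⟨w, hw⟩ := mem_recorded.1 hm
  exact hSU w (h.isLabeledVertex w (NodeData.not_isIdle_of_mem_upMerged hw)).1 u hw hk

lemma reviveUp (hinj : T.ParInjective) (h : InvariantB T c.tree c.data) {L : MLLLink}
    {b : Bool} {rest : List (MLLLink × Bool)} {w v : ℕ}
    (hQr : (c.data c.active).Qright = (L, b) :: rest) (hSU : v ∈ (c.data w).SUup)
    (hkv : c.tree.kind v = .par L) :
    InvariantB T c.tree (reviveUpUpdate c rest L w v) := by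
  have hRQ :=
    NodeData.rightQueue_of_Qright_eq_cons (n' := { c.data c.active with Qright := rest }) hQr
  have hUQ : recorded NodeData.upQueue (reviveUpUpdate c rest L w v) =
      insert v (recorded NodeData.upQueue c.data) :=
    (recorded_update_of_eq_insert (NodeData.upQueue_of_Qup_eq_append rfl)).trans
      (congrArg _ (recorded_update_of_eq (by rfl)))
  have hRQ' : recorded NodeData.rightQueue (reviveUpUpdate c rest L w v) =
      recorded NodeData.rightQueue (stashRightUpdate c rest L) := recorded_update_of_eq (by rfl)
  have hvM : v ∈ recorded NodeData.upMerged c.data := mem_recorded.2 ⟨w, hSU⟩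
  have hvM₁ : v ∈ (stashRightUpdate c rest L w).upMerged := by
    simp only [stashRightUpdate, Function.update_apply]
    split_ifs with hwa
    · exact hwa ▸ hSU
    · exact hSU
  refine h.moveRight (hUQ ▸ Set.subset_insert _ _) ?_
    ((recorded_update_of_eq (by rfl)).trans (recorded_update_of_eq (by rfl)))
    (by rw [hRQ']; exact recorded_subset_insert_update hRQ.subset)
    ((recorded_update_of_eq (by rfl)).trans
      (recorded_update_of_eq_insert (Finset.coe_insert _ _)))
    (fun z hz => not_isIdle_of_not_isIdle_update (fun _ =>
      NodeData.not_isIdle_of_mem_rightQueue (hRQ ▸ Set.mem_insert _ _)) z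
      (not_isIdle_of_not_isIdle_update (fun _ => NodeData.not_isIdle_of_mem_upMerged hvM₁) z hz))
    ?_
  · rw [hUQ]
    exact Set.insert_subset (Or.inr hvM) Set.subset_union_left
  · intro u hu hk
    rw [hUQ, h.eq_of_kind_eq_par hinj hu hk (h.upMerged_subset hvM) hkv]
    exact Set.mem_insert _ _

lemma stashUp (h : InvariantB T c.tree c.data) {v : ℕ} {b : Bool} {rest : List (ℕ × Bool)}
    {L : MLLLink} (hQu : (c.data c.active).Qup = (v, b) :: rest)
    (hkv : c.tree.kind v = .par L) (hSU : ∀ w ∈ c.tree.V, L ∉ (c.data w).SUright) :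
    InvariantB T c.tree (stashUpUpdate c rest v) := by
  have hUQ := NodeData.upQueue_of_Qup_eq_cons (n' := { c.data c.active with Qup := rest }) hQu
  have hRQ : recorded NodeData.rightQueue (stashUpUpdate c rest v) =
      recorded NodeData.rightQueue c.data := recorded_update_of_eq (by rfl)
  refine h.moveUp (mem_recorded.2 ⟨c.active, hUQ ▸ Set.mem_insert _ _⟩)
    (recorded_subset_insert_update hUQ.subset)
    (recorded_update_subset (hUQ ▸ Set.subset_insert _ _))
    (recorded_update_of_eq_insert (Finset.coe_insert _ _)) hRQ.symm.subset
    (recorded_update_of_eq (by rfl))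
    (not_isIdle_of_not_isIdle_update fun _ =>
      NodeData.not_isIdle_of_mem_upQueue (hUQ ▸ Set.mem_insert _ _)) ?_
  intro L' hv hk
  obtain rfl : L = L' := by simpa [hkv] using hk
  refine hRQ ▸ (h.parTracked v hv L hk).2.1.resolve_right ?_
  intro hm
  obtain ⟨w, hw⟩ := mem_recorded.1 hm
  exact hSU w (h.isLabeledVertex w (NodeData.not_isIdle_of_mem_rightMerged hw)).1 hw

lemma reviveRight (h : InvariantB T c.tree c.data) {v : ℕ} {b : Bool}
    {rest : List (ℕ × Bool)} {L : MLLLink} {w : ℕ}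
    (hQu : (c.data c.active).Qup = (v, b) :: rest) (hkv : c.tree.kind v = .par L)
    (hSU : L ∈ (c.data w).SUright) :
    InvariantB T c.tree (reviveRightUpdate c rest v L w) := by
  have hUQ := NodeData.upQueue_of_Qup_eq_cons (n' := { c.data c.active with Qup := rest }) hQu
  have hUQ' : recorded NodeData.upQueue (reviveRightUpdate c rest v L w) =
      recorded NodeData.upQueue (stashUpUpdate c rest v) := recorded_update_of_eq (by rfl)
  have hRQ : recorded NodeData.rightQueue (reviveRightUpdate c rest v L w) =
      insert L (recorded NodeData.rightQueue c.data) :=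
    (recorded_update_of_eq_insert (NodeData.rightQueue_of_Qright_eq_append rfl)).trans
      (congrArg _ (recorded_update_of_eq (by rfl)))
  have hLM₁ : L ∈ (stashUpUpdate c rest v w).rightMerged := by
    simp only [stashUpUpdate, Function.update_apply]
    split_ifs with hwa
    · exact hwa ▸ hSU
    · exact hSU
  refine h.moveUp (mem_recorded.2 ⟨c.active, hUQ ▸ Set.mem_insert _ _⟩)
    (by rw [hUQ']; exact recorded_subset_insert_update hUQ.subset)
    (hUQ' ▸ recorded_update_subset (hUQ ▸ Set.subset_insert _ _))
    ((recorded_update_of_eq (by rfl)).trans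
      (recorded_update_of_eq_insert (Finset.coe_insert _ _)))
    (hRQ ▸ Set.subset_insert _ _)
    ((recorded_update_of_eq (by rfl)).trans (recorded_update_of_eq (by rfl)))
    (fun z hz => not_isIdle_of_not_isIdle_update (fun _ =>
      NodeData.not_isIdle_of_mem_upQueue (hUQ ▸ Set.mem_insert _ _)) z
      (not_isIdle_of_not_isIdle_update (fun _ => NodeData.not_isIdle_of_mem_rightMerged hLM₁)
        z hz)) ?_
  intro L' _ hk
  obtain rfl : L = L' := by simpa [hkv] using hk
  exact hRQ ▸ Set.mem_insert _ _

lemma jump (h : InvariantB T c.tree c.data) {rest : List ℕ} {m : ℕ} {s : Finset DLabel}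
    (hmV : m ∈ c.tree.V) (hkm : c.tree.kind m = .labeled s) :
    InvariantB T c.tree (jumpUpdate c rest m) := by
  refine h.of_recorded_eq (fun _ _ => Iff.rfl) subset_rfl
    ((recorded_update_of_eq (by rfl)).trans (recorded_update_of_eq (by rfl)))
    ((recorded_update_of_absorb (b := c.active) (Finset.coe_union _ _)).trans
      (recorded_update_of_eq (by rfl)))
    ((recorded_update_of_eq (by rfl)).trans (recorded_update_of_eq (by rfl)))
    ((recorded_update_of_absorb (b := c.active) (Finset.coe_union _ _)).trans
      (recorded_update_of_eq (by rfl))) fun w hw => ?_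
  by_cases hwm : w = m
  · exact hwm ▸ ⟨hmV, s, hkm⟩
  · refine h.isLabeledVertex w (not_isIdle_of_not_isIdle_update (a := c.active)
      (x := { c.data c.active with Qdown := rest }) id w ?_)
    simpa [jumpUpdate, hwm] using hw

lemma union (h : InvariantB T c.tree c.data) {rest : List ℕ} {m : ℕ} {s s' : Finset DLabel}
    (hact : c.active ∈ c.tree.V) (hma : m ≠ c.active)
    (hka : c.tree.kind c.active = .labeled s) (hkm : c.tree.kind m = .labeled s') :
    InvariantB T (c.tree.contract c.active m) (unionUpdate c rest m) := by
  have hidle := NodeData.isIdle_empty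
  refine h.of_recorded_eq (PreTree.contract_kind_eq_par_iff hka hkm) (Finset.erase_subset _ _)
    (recorded_update_merge hma hidle.1 NodeData.upQueue_merge)
    (recorded_update_merge hma hidle.2.2.1 NodeData.upMerged_merge)
    (recorded_update_merge hma hidle.2.1 NodeData.rightQueue_merge)
    (recorded_update_merge hma hidle.2.2.2 NodeData.rightMerged_merge) fun w hw => ?_
  by_cases hwa : w = c.active
  · exact hwa ▸ PreTree.isLabeledVertex_contract hka hkm ⟨hact, s, hka⟩ hma.symm
  by_cases hwm : w = m
  · subst hwm; simp [unionUpdate, hwa, hidle] at hw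
  · exact PreTree.isLabeledVertex_contract hka hkm
      (h.isLabeledVertex w (by simpa [unionUpdate, hwa, hwm] using hw)) hwm

lemma step (hinj : T.ParInjective) {c c' : ConfigB} (h : InvariantB T c.tree c.data)
    (hs : StepB c c') : InvariantB T c'.tree c'.data := by
  cases hs with
  | jump _ _ _ _ _ _ _ _ _ _ _ _ hmV hkm => exact h.jump hmV hkm
  | union _ _ _ _ _ _ hact _ _ _ _ hma _ hka hkm => exact h.union hact hma hka hkm
  | elimRight1 _ _ _ _ _ _ _ _ hQr _ hv hkv => exact h.elimRight hinj hv hkv hQr ⟨rfl, rfl, rfl⟩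
  | elimRight2 _ _ _ _ _ _ _ _ _ hQr _ hv hkv =>
    exact h.elimRight hinj hv hkv hQr ⟨rfl, rfl, rfl⟩
  | reviveUp _ _ _ _ _ _ _ _ hQr _ _ hSU hkv => exact h.reviveUp hinj hQr hSU hkv
  | stashRight _ _ _ _ _ _ hQr _ hSU => exact h.stashRight hQr hSU
  | elimUp1 _ _ _ _ _ _ _ _ _ hQu hkv _ hv => exact h.elimUp hinj hv hkv hQu ⟨rfl, rfl, rfl⟩
  | elimUp2 _ _ _ _ _ _ _ _ _ _ hQu hkv _ hv => exact h.elimUp hinj hv hkv hQu ⟨rfl, rfl, rfl⟩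
  | reviveRight _ _ _ _ _ _ _ _ _ hQu hkv _ _ hSU => exact h.reviveRight hQu hkv hSU
  | stashUp _ _ _ _ _ _ _ _ hQu hkv _ hSU => exact h.stashUp hQu hkv hSU

lemma of_reflTransGen {Θ : ProofStructure} (hT : IsTranslation Θ T) {d : ℕ → NodeData}
    (hd : InitData T d) {n : ℕ} {c : ConfigB}
    (hrun : Relation.ReflTransGen StepB
      { tree := T, active := n, data := d, rep := initRep, visited := ∅ } c) :
    InvariantB T c.tree c.data := by
  induction hrun with
  | refl => exact init hT hd
  | tail _ hs ih => exact ih.step hT.parInjective hs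

end InvariantB

theorem algorithm_B_invariant_general (Θ : ProofStructure)
    (T : PreTree) (hT : IsTranslation Θ T) (n : ℕ)
    (data0 : ℕ → NodeData) (hd : InitData T data0)
    (c : ConfigB)
    (hrun : Relation.ReflTransGen StepB
      { tree := T, active := n, data := data0, rep := initRep, visited := ∅ } c)
    (v : ℕ) (hv : v ∈ c.tree.V) (L : MLLLink) (hL : c.tree.kind v = DNodeKind.par L) :
    (∃ w ∈ c.tree.V, c.tree.IsLabeledVertex w ∧ ∃ b, (v, b) ∈ (c.data w).Qup) ∨
    (∃ w ∈ c.tree.V, c.tree.IsLabeledVertex w ∧ ∃ b, (L, b) ∈ (c.data w).Qright) := by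
  have h := InvariantB.of_reflTransGen hT hd hrun
  rcases (h.parTracked v hv L hL).2.2 with hq | hq
  · obtain ⟨w, b, hb⟩ := mem_recorded.1 hq
    have hw := h.isLabeledVertex w (NodeData.not_isIdle_of_mem_upQueue ⟨b, hb⟩)
    exact Or.inl ⟨w, hw.1, hw, b, hb⟩
  · obtain ⟨w, b, hb⟩ := mem_recorded.1 hq
    have hw := h.isLabeledVertex w (NodeData.not_isIdle_of_mem_rightQueue ⟨b, hb⟩)
    exact Or.inr ⟨w, hw.1, hw, b, hb⟩

/-- Throughout the execution of Algorithm B, for each ⅋-node L present in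
the current deNM-tree, either L is in the queue Q_up of some labeled node, or the right
premise label r_L is in the queue Q_right of some labeled node. -/
theorem algorithm_B_invariant (Θ : ProofStructure)
    (T : PreTree) (hT : IsTranslation Θ T) (n : ℕ) (hn : T.IsLabeledVertex n)
    (data0 : ℕ → NodeData) (hd : InitData T data0)
    (c : ConfigB)
    (hrun : Relation.ReflTransGen StepB
      { tree := T, active := n, data := data0, rep := initRep, visited := ∅ } c)
    (v : ℕ) (hv : v ∈ c.tree.V) (L : MLLLink) (hL : c.tree.kind v = DNodeKind.par L) :
    (∃ w ∈ c.tree.V, c.tree.IsLabeledVertex w ∧ ∃ b, (v, b) ∈ (c.data w).Qup) ∨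
    (∃ w ∈ c.tree.V, c.tree.IsLabeledVertex w ∧ ∃ b, (L, b) ∈ (c.data w).Qright) :=
  algorithm_B_invariant_general Θ T hT n data0 hd c hrun v hv L hL
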